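/- arXiv:0711.5005 — 3 statements merged into one kernel-verified Lean document; each statement's English description precedes it below -/
import Mathlib

section
/- Let K be a positive integer, let j ≥ 0 and m ≥ 0 be integers, let c be a real number with |c|·K² ≤ 1/48, and set f(y) := (y^j/K^j)·exp(2πi c y³ + 2πi x y), a smooth function of the real variable y depending on the real parameter x. Then for all real x with |x| ≤ 3/4 and all real y with |y| ≤ K, the m-th derivative of f satisfies |f^{(m)}(y)| ≤ (6π|c|K² + 3π/2 + (2m + j)/K)^m. -/
/-!
Writing `e(y) = exp(2πi(cy³ + xy))`, one has `f⁽ⁿ⁾ = Pₙ · e` with `P₀ = Xʲ/Kʲ` and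
`Pₙ₊₁ = 2πi(x + 3cX²)Pₙ + Pₙ'`, and `|e(y)| = 1` for real `y`. Measure polynomials by the weighted
coefficient norm `∑ ‖aₖ‖ Kᵏ`, which dominates `|P(y)|` for `|y| ≤ K`. Multiplying by `2πix` or by
`6πicX²` scales it by at most `2π|x|` resp. `6π|c|K²`, and differentiating a polynomial of degree
at most `d` scales it by at most `d/K`; since `deg Pₙ ≤ j + 2n`, each step costs a factor of at most
`6π|c|K² + 3π/2 + (2m + j)/K`.
-/

open Polynomial Finset Complex

namespace Polynomial

section WeightedNorm

variable {R : Type*} [SeminormedRing R]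

noncomputable def weightedNorm (r : ℝ) (p : R[X]) : ℝ :=
  p.sum fun n a => ‖a‖ * r ^ n

variable {r : ℝ} {p q : R[X]}

theorem weightedNorm_eq_sum_range {N : ℕ} (hN : p.natDegree < N) :
    weightedNorm r p = ∑ k ∈ range N, ‖p.coeff k‖ * r ^ k :=
  p.sum_over_range' (by simp) N hN

theorem weightedNorm_add_le (hr : 0 ≤ r) :
    weightedNorm r (p + q) ≤ weightedNorm r p + weightedNorm r q := by
  set N := max (p + q).natDegree (max p.natDegree q.natDegree) + 1
  rw [weightedNorm_eq_sum_range (N := N) (by omega), weightedNorm_eq_sum_range (N := N) (by omega),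
    weightedNorm_eq_sum_range (N := N) (by omega), ← sum_add_distrib]
  gcongr with k
  rw [coeff_add, ← add_mul]
  gcongr
  exact norm_add_le _ _

theorem weightedNorm_C_mul_le (hr : 0 ≤ r) (a : R) :
    weightedNorm r (C a * p) ≤ ‖a‖ * weightedNorm r p := by
  set N := max (C a * p).natDegree p.natDegree + 1
  rw [weightedNorm_eq_sum_range (N := N) (by omega), weightedNorm_eq_sum_range (N := N) (by omega),
    mul_sum]
  refine sum_le_sum fun k _ => ?_
  rw [coeff_C_mul, ← mul_assoc]
  exact mul_le_mul_of_nonneg_right (norm_mul_le _ _) (by positivity)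

theorem weightedNorm_mul_X_pow (k : ℕ) : weightedNorm r (p * X ^ k) = weightedNorm r p * r ^ k := by
  have hdeg : (p * X ^ k).natDegree < k + (p.natDegree + 1) := by
    have := natDegree_mul_le (p := p) (q := X ^ k)
    have := natDegree_X_pow_le (R := R) k
    omega
  rw [weightedNorm_eq_sum_range hdeg, weightedNorm_eq_sum_range (Nat.lt_succ_self _),
    sum_range_add, sum_mul, sum_eq_zero, zero_add]
  · refine sum_congr rfl fun n _ => ?_
    rw [add_comm k n, coeff_mul_X_pow, pow_add]
    ring
  · intro n hn
    rw [coeff_mul_X_pow', if_neg (by simpa using hn), norm_zero, zero_mul]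

theorem weightedNorm_derivative_le [NormOneClass R] (hr : 0 < r) {d : ℕ} (hp : p.natDegree ≤ d) :
    weightedNorm r (derivative p) ≤ d / r * weightedNorm r p := by
  set N := p.natDegree + 1
  have hterm : ∀ k, ‖p.coeff (k + 1) * (k + 1)‖ * r ^ k ≤
      d / r * (‖p.coeff (k + 1)‖ * r ^ (k + 1)) := by
    intro k
    by_cases hk : p.coeff (k + 1) = 0
    · simp [hk]
    have hkd : (k + 1 : ℝ) ≤ d := by exact_mod_cast (le_natDegree_of_ne_zero hk).trans hp
    calc ‖p.coeff (k + 1) * (k + 1)‖ * r ^ k ≤ ‖p.coeff (k + 1)‖ * (k + 1) * r ^ k := by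
          gcongr
          refine (norm_mul_le _ _).trans ?_
          gcongr
          exact_mod_cast (Nat.norm_cast_le (α := R) (k + 1)).trans_eq (by simp)
      _ ≤ ‖p.coeff (k + 1)‖ * d * r ^ k := by gcongr
      _ = d / r * (‖p.coeff (k + 1)‖ * r ^ (k + 1)) := by field_simp; ring
  have hdeg : (derivative p).natDegree < N := by
    have := natDegree_derivative_le p
    omega
  calc weightedNorm r (derivative p) = ∑ k ∈ range N, ‖p.coeff (k + 1) * (k + 1)‖ * r ^ k := by
        simp only [weightedNorm_eq_sum_range hdeg, coeff_derivative]
    _ ≤ d / r * ∑ k ∈ range N, ‖p.coeff (k + 1)‖ * r ^ (k + 1) := by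
        rw [mul_sum]; exact sum_le_sum fun k _ => hterm k
    _ ≤ d / r * weightedNorm r p := by
        gcongr
        rw [weightedNorm_eq_sum_range (N := N + 1) (by omega), sum_range_succ' _ N]
        simp only [le_add_iff_nonneg_right]
        positivity

theorem weightedNorm_monomial (n : ℕ) (a : R) : weightedNorm r (monomial n a) = ‖a‖ * r ^ n :=
  sum_monomial_index a _ (by simp)

theorem norm_eval_le_weightedNorm [NormOneClass R] {z : R} (hz : ‖z‖ ≤ r) :
    ‖p.eval z‖ ≤ weightedNorm r p := by
  rw [eval_eq_sum, Polynomial.sum_def, weightedNorm, Polynomial.sum_def]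
  refine (norm_sum_le _ _).trans (sum_le_sum fun n _ => ?_)
  refine (norm_mul_le _ _).trans ?_
  gcongr
  exact (norm_pow_le z n).trans (pow_le_pow_left₀ (norm_nonneg z) hz n)

end WeightedNorm

section ExpMul

noncomputable def mulExpDeriv (Q P : ℂ[X]) : ℂ[X] := derivative Q * P + derivative P

theorem hasDerivAt_eval_mul_exp_eval (P Q : ℂ[X]) (z : ℂ) :
    HasDerivAt (fun z => P.eval z * Complex.exp (Q.eval z))
      ((mulExpDeriv Q P).eval z * Complex.exp (Q.eval z)) z := by
  refine ((P.hasDerivAt z).mul (Q.hasDerivAt z).cexp).congr_deriv ?_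
  simp only [mulExpDeriv, eval_add, eval_mul]
  ring

theorem iteratedDeriv_eval_mul_exp_eval_ofReal (Q : ℂ[X]) (m : ℕ) (P : ℂ[X]) :
    iteratedDeriv m (fun y : ℝ => P.eval (y : ℂ) * Complex.exp (Q.eval (y : ℂ))) =
      fun y : ℝ => ((mulExpDeriv Q)^[m] P).eval (y : ℂ) * Complex.exp (Q.eval (y : ℂ)) := by
  induction m generalizing P with
  | zero => simp
  | succ m ih =>
    have hderiv : deriv (fun y : ℝ => P.eval (y : ℂ) * Complex.exp (Q.eval (y : ℂ))) =
        fun y : ℝ => (mulExpDeriv Q P).eval (y : ℂ) * Complex.exp (Q.eval (y : ℂ)) := by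
      funext y
      exact (hasDerivAt_eval_mul_exp_eval P Q y).comp_ofReal.deriv
    rw [iteratedDeriv_succ', hderiv, ih, Function.iterate_succ_apply]

end ExpMul

section CubicPhase

noncomputable def cubicPhase (c x : ℝ) : ℂ[X] :=
  C (2 * Real.pi * I) * (C (c : ℂ) * X ^ 3 + C (x : ℂ) * X)

theorem derivative_cubicPhase (c x : ℝ) :
    derivative (cubicPhase c x) = C (6 * Real.pi * I * c) * X ^ 2 + C (2 * Real.pi * I * x) := by
  simp only [cubicPhase, derivative_C_mul, derivative_add, derivative_X_pow, derivative_X, mul_one]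
  simp only [map_mul, map_ofNat, map_natCast]
  ring

theorem norm_exp_eval_cubicPhase (c x y : ℝ) : ‖exp ((cubicPhase c x).eval (y : ℂ))‖ = 1 := by
  have : (cubicPhase c x).eval (y : ℂ) = ((2 * Real.pi * (c * y ^ 3 + x * y) : ℝ) : ℂ) * I := by
    simp only [cubicPhase, eval_mul, eval_C, eval_add, eval_pow, eval_X]
    push_cast
    ring
  rw [this, norm_exp_ofReal_mul_I]

theorem natDegree_mulExpDeriv_cubicPhase_le (c x : ℝ) (P : ℂ[X]) :
    (mulExpDeriv (cubicPhase c x) P).natDegree ≤ P.natDegree + 2 := by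
  rw [mulExpDeriv, derivative_cubicPhase, add_mul]
  have h₁ := (natDegree_mul_le (p := C (6 * Real.pi * I * c) * X ^ 2) (q := P)).trans
    (Nat.add_le_add_right (natDegree_C_mul_X_pow_le _ 2) _)
  have h₂ := natDegree_C_mul_le (2 * Real.pi * I * x) P
  have h₃ := natDegree_derivative_le P
  exact natDegree_add_le_of_degree_le
    (natDegree_add_le_of_degree_le (by omega) (by omega)) (by omega)

theorem weightedNorm_mulExpDeriv_cubicPhase_le {r : ℝ} (hr : 0 < r) (c x : ℝ) {P : ℂ[X]} {d : ℕ}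
    (hP : P.natDegree ≤ d) :
    weightedNorm r (mulExpDeriv (cubicPhase c x) P) ≤
      (6 * Real.pi * |c| * r ^ 2 + 2 * Real.pi * |x| + d / r) * weightedNorm r P := by
  have h6 : ‖(6 * Real.pi * I * c : ℂ)‖ = 6 * Real.pi * |c| := by
    simp [abs_of_pos Real.pi_pos]
  have h2 : ‖(2 * Real.pi * I * x : ℂ)‖ = 2 * Real.pi * |x| := by
    simp [abs_of_pos Real.pi_pos]
  rw [mulExpDeriv, derivative_cubicPhase, add_mul, mul_assoc, mul_comm (X ^ 2) P]
  calc _ ≤ ‖(6 * Real.pi * I * c : ℂ)‖ * (weightedNorm r P * r ^ 2) +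
        ‖(2 * Real.pi * I * x : ℂ)‖ * weightedNorm r P + d / r * weightedNorm r P := by
        refine (weightedNorm_add_le hr.le).trans (add_le_add ((weightedNorm_add_le hr.le).trans
          (add_le_add ?_ (weightedNorm_C_mul_le hr.le _))) (weightedNorm_derivative_le hr hP))
        rw [← weightedNorm_mul_X_pow]
        exact weightedNorm_C_mul_le hr.le _
    _ = _ := by rw [h6, h2]; ring

variable {c x : ℝ}

theorem natDegree_iterate_mulExpDeriv_cubicPhase_le (P : ℂ[X]) (n : ℕ) :
    ((mulExpDeriv (cubicPhase c x))^[n] P).natDegree ≤ P.natDegree + 2 * n := by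
  induction n with
  | zero => simp
  | succ n ih =>
    rw [Function.iterate_succ_apply']
    have := natDegree_mulExpDeriv_cubicPhase_le c x ((mulExpDeriv (cubicPhase c x))^[n] P)
    omega

theorem weightedNorm_iterate_mulExpDeriv_cubicPhase_le {r : ℝ} (hr : 0 < r) {P : ℂ[X]} {n D : ℕ}
    (hD : P.natDegree + 2 * n ≤ D) :
    weightedNorm r ((mulExpDeriv (cubicPhase c x))^[n] P) ≤
      (6 * Real.pi * |c| * r ^ 2 + 2 * Real.pi * |x| + D / r) ^ n * weightedNorm r P := by
  induction n with
  | zero => simp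
  | succ n ih =>
    rw [Function.iterate_succ_apply', pow_succ', mul_assoc]
    have hdeg := natDegree_iterate_mulExpDeriv_cubicPhase_le (c := c) (x := x) P n
    refine (weightedNorm_mulExpDeriv_cubicPhase_le hr c x (d := D) (by omega)).trans ?_
    gcongr
    exact ih (by omega)

end CubicPhase

end Polynomial

theorem cubic_phase_deriv_bound_general (K : ℕ) (hK : 0 < K) (j m : ℕ) (c x y : ℝ)
    (hx : |x| ≤ 3 / 4) (hy : |y| ≤ (K : ℝ)) :
    ‖iteratedDeriv m
        (fun y : ℝ => (y : ℂ) ^ j / (K : ℂ) ^ j *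
          Complex.exp (2 * Real.pi * Complex.I * ((c * y ^ 3 + x * y : ℝ) : ℂ))) y‖ ≤
      (6 * Real.pi * |c| * (K : ℝ) ^ 2 + 3 * Real.pi / 2 + (2 * m + j) / (K : ℝ)) ^ m := by
  have hKpos : (0 : ℝ) < K := by exact_mod_cast hK
  set P₀ : ℂ[X] := monomial j ((K : ℂ) ^ j)⁻¹
  have hf : (fun y : ℝ => (y : ℂ) ^ j / (K : ℂ) ^ j *
      exp (2 * Real.pi * I * ((c * y ^ 3 + x * y : ℝ) : ℂ))) =
      fun y : ℝ => P₀.eval (y : ℂ) * exp ((cubicPhase c x).eval (y : ℂ)) := by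
    funext y
    simp only [P₀, cubicPhase, eval_monomial, eval_mul, eval_C, eval_add, eval_pow, eval_X]
    push_cast
    ring
  have hP₀ : weightedNorm K P₀ = 1 := by
    rw [weightedNorm_monomial, norm_inv, norm_pow, Complex.norm_natCast,
      inv_mul_cancel₀ (by positivity)]
  have hdeg : P₀.natDegree + 2 * m ≤ 2 * m + j := by
    have : P₀.natDegree ≤ j := natDegree_monomial_le _
    omega
  rw [hf, iteratedDeriv_eval_mul_exp_eval_ofReal, norm_mul, norm_exp_eval_cubicPhase, mul_one]
  calc _ ≤ weightedNorm K ((mulExpDeriv (cubicPhase c x))^[m] P₀) :=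
        norm_eval_le_weightedNorm (by simpa using hy)
    _ ≤ (6 * Real.pi * |c| * (K : ℝ) ^ 2 + 2 * Real.pi * |x| + ((2 * m + j : ℕ) : ℝ) / K) ^ m *
          weightedNorm K P₀ := weightedNorm_iterate_mulExpDeriv_cubicPhase_le hKpos hdeg
    _ ≤ _ := by
        rw [hP₀, mul_one]
        push_cast
        gcongr
        nlinarith [Real.pi_pos]

/-- Lemma 5.2 (derivative bound): for `f(y) = (y^j/K^j)·exp(2πi c y³ + 2πi x y)`
with `|c|·K² ≤ 1/48`, `|x| ≤ 3/4`, `|y| ≤ K`, the `m`-th derivative satisfies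
`|f⁽ᵐ⁾(y)| ≤ (6π|c|K² + 3π/2 + (2m+j)/K)^m`. -/
theorem cubic_phase_deriv_bound (K : ℕ) (hK : 0 < K) (j m : ℕ) (c x y : ℝ)
    (hc : |c| * (K : ℝ) ^ 2 ≤ 1 / 48) (hx : |x| ≤ 3 / 4) (hy : |y| ≤ (K : ℝ)) :
    ‖iteratedDeriv m
        (fun y : ℝ => (y : ℂ) ^ j / (K : ℂ) ^ j *
          Complex.exp (2 * Real.pi * Complex.I * ((c * y ^ 3 + x * y : ℝ) : ℂ))) y‖ ≤
      (6 * Real.pi * |c| * (K : ℝ) ^ 2 + 3 * Real.pi / 2 + (2 * m + j) / (K : ℝ)) ^ m :=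
  cubic_phase_deriv_bound_general K hK j m c x y hx hy
end

section
/- Let a, b, b', c', K, K' be real numbers with 0 ≤ a < 1, b > 0, K > 0, bK < 1, b' > 0, K' > 0, |c'|·K'² ≤ 0.01·b', 1 ≤ b'·K', and K ≤ 2b'K' + 1, and set c := c'/(8·b'³). Then a + 2bK + 3|c|K² < 3 + 4|c'|·K'²/b'. -/
/-!
Since `b'K' ≥ 1`, the length bound `K ≤ 2b'K' + 1` gives `K ≤ 3b'K'`, so the cubic term is at most
`3 · |c'|/(8b'³) · 9b'²K'² = (27/8)|c'|K'²/b'`. The other two terms are below `1` and `2`.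
-/

lemma three_mul_abs_div_cube_mul_sq_le {b' c' K K' : ℝ} (hb' : 0 < b') (hK : 0 ≤ K)
    (hK3 : K ≤ 3 * (b' * K')) :
    3 * |c' / (8 * b' ^ 3)| * K ^ 2 ≤ 4 * |c'| * K' ^ 2 / b' := by
  have hK_sq : K ^ 2 ≤ 9 * b' ^ 2 * K' ^ 2 :=
    calc K ^ 2 ≤ (3 * (b' * K')) ^ 2 := pow_le_pow_left₀ hK hK3 2
      _ = 9 * b' ^ 2 * K' ^ 2 := by ring
  calc 3 * |c' / (8 * b' ^ 3)| * K ^ 2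
      = 3 * |c'| / (8 * b' ^ 3) * K ^ 2 := by
        rw [abs_div, abs_of_pos (by positivity : (0 : ℝ) < 8 * b' ^ 3), mul_div_assoc]
    _ ≤ 3 * |c'| / (8 * b' ^ 3) * (9 * b' ^ 2 * K' ^ 2) := by gcongr
    _ = 27 / 8 * (|c'| * K' ^ 2 / b') := by field_simp; ring
    _ ≤ 4 * (|c'| * K' ^ 2 / b') := by gcongr; norm_num
    _ = 4 * |c'| * K' ^ 2 / b' := by ring

theorem boundary_case_bK_small_general (a b b' c' K K' : ℝ) (ha1 : a < 1)
    (hK : 0 < K) (hbK : b * K < 1) (hb' : 0 < b')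
    (hbK' : 1 ≤ b' * K') (hKK : K ≤ 2 * b' * K' + 1)
    (c : ℝ) (hc : c = c' / (8 * b' ^ 3)) :
    a + 2 * b * K + 3 * |c| * K ^ 2 < 3 + 4 * |c'| * K' ^ 2 / b' := by
  have hK3 : K ≤ 3 * (b' * K') := by linarith
  have hcubic : 3 * |c| * K ^ 2 ≤ 4 * |c'| * K' ^ 2 / b' :=
    hc ▸ three_mul_abs_div_cube_mul_sq_le hb' hK.le hK3
  linarith

/-- If the van der Corput iteration halts because `bK < 1`, then
`a + 2bK + 3|c|K² < 3 + 4|c'|K'²/b'`, i.e. `a + 2bK + |3cK²| = O(1)`. -/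
theorem boundary_case_bK_small (a b b' c' K K' : ℝ) (ha0 : 0 ≤ a) (ha1 : a < 1)
    (hb : 0 < b) (hK : 0 < K) (hbK : b * K < 1) (hb' : 0 < b') (hK' : 0 < K')
    (hc' : |c'| * K' ^ 2 ≤ 0.01 * b') (hbK' : 1 ≤ b' * K') (hKK : K ≤ 2 * b' * K' + 1)
    (c : ℝ) (hc : c = c' / (8 * b' ^ 3)) :
    a + 2 * b * K + 3 * |c| * K ^ 2 < 3 + 4 * |c'| * K' ^ 2 / b' :=
  boundary_case_bK_small_general a b b' c' K K' ha1 hK hbK hb' hbK' hKK c hc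
end

section
/- Let n and R be positive integers with 2^n ≥ 16·R, set S̃ := 3 + ⌊R/n⌋, and let (n_d)_{d≥0} be integers with n_d ≤ n − d for all d ≥ 0. Suppose real numbers β_s^{(d)}, defined for integers d ≥ 0 and 3 ≤ s ≤ S̃, satisfy |β_s^{(0)}| ≤ 2^{R−2}·2^{(3−2s)n} for all 3 ≤ s ≤ S̃, and the recursion β_s^{(d+1)} = Σ_{p=s}^{S̃} C(p,s)·2^{n_d(p−s)}·β_p^{(d)} for all d ≥ 0 and 3 ≤ s ≤ S̃, where C(p,s) is the binomial coefficient. Then for all d ≥ 0 and all 3 ≤ s ≤ S̃, |β_s^{(d)}| ≤ 2^{R−2}·2^{(3−2s)n}·2^{sd}·(1 + 1/(2R))^d. -/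
/-!
Induction on `d`. Writing `x = 2⁻ⁿ`, the bound for `β_p^{(d)}` carries the factor `x^{2p}`;
since `2^{n_d} ≤ 2^{-d} x⁻¹`, the term of index `p` in the recursion for `β_s^{(d+1)}` is at most
the bound for `β_s^{(d)}` times `C(p,s) x^{p-s}`, and `∑_{p ≥ s} C(p,s) x^{p-s} ≤ 2^s (1 + 4x)`
because `C(p,s) ≤ 2^p`. Finally `4x ≤ 1/(4R)` as `2ⁿ ≥ 16R`.
-/

open Finset

lemma sum_choose_mul_pow_sub_le (s S : ℕ) {x : ℝ} (hx0 : 0 ≤ x) (hx : x ≤ 1 / 4) :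
    ∑ p ∈ Icc s S, (p.choose s : ℝ) * x ^ (p - s) ≤ 2 ^ s * (1 + 4 * x) := by
  rw [← Ico_add_one_right_eq_Icc, sum_Ico_eq_sum_range]
  simp only [Nat.add_sub_cancel_left]
  have hgeom : ∑ k ∈ range (S + 1 - s), (2 * x) ^ k ≤ 1 + 4 * x := by
    rw [range_eq_Ico]
    calc ∑ k ∈ Ico 0 (S + 1 - s), (2 * x) ^ k ≤ (2 * x) ^ 0 / (1 - 2 * x) :=
          geom_sum_Ico_le_of_lt_one (by positivity) (by linarith)
      _ ≤ 1 + 4 * x := by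
          rw [pow_zero, div_le_iff₀ (by linarith)]
          nlinarith
  calc ∑ k ∈ range (S + 1 - s), ((s + k).choose s : ℝ) * x ^ k
      ≤ ∑ k ∈ range (S + 1 - s), 2 ^ s * (2 * x) ^ k := by
        refine sum_le_sum fun k _ => ?_
        calc ((s + k).choose s : ℝ) * x ^ k ≤ 2 ^ (s + k) * x ^ k := by
              gcongr; exact_mod_cast Nat.choose_le_two_pow _ _
          _ = 2 ^ s * (2 * x) ^ k := by ring
    _ = 2 ^ s * ∑ k ∈ range (S + 1 - s), (2 * x) ^ k := (mul_sum ..).symm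
    _ ≤ 2 ^ s * (1 + 4 * x) := by gcongr

lemma sum_choose_mul_inv_two_pow_le (s S : ℕ) {n R : ℕ} (hR : 0 < R) (h16 : 16 * R ≤ 2 ^ n) :
    ∑ p ∈ Icc s S, (p.choose s : ℝ) * ((2 : ℝ) ^ n)⁻¹ ^ (p - s) ≤ 2 ^ s * (1 + 1 / (2 * R)) := by
  have hRx : 16 * R * ((2 : ℝ) ^ n)⁻¹ ≤ 1 := by
    rw [← div_eq_mul_inv, div_le_one (by positivity)]
    exact_mod_cast h16
  have hR1 : (1 : ℝ) ≤ R := by exact_mod_cast hR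
  have hx : 0 ≤ ((2 : ℝ) ^ n)⁻¹ := by positivity
  refine (sum_choose_mul_pow_sub_le s S hx (by nlinarith)).trans ?_
  gcongr
  rw [le_div_iff₀ (by positivity)]
  nlinarith

lemma abs_le_of_binomial_recursion {β : ℕ → ℕ → ℝ} {t : ℕ → ℝ} {a S : ℕ} {K x A : ℝ}
    (hK : 0 ≤ K) (hx : 0 ≤ x) (hA : 0 ≤ A) (ht0 : ∀ d, 0 ≤ t d)
    (ht : ∀ d, t d * 2 ^ d * x ≤ 1)
    (hsum : ∀ s, ∑ p ∈ Icc s S, (p.choose s : ℝ) * x ^ (p - s) ≤ 2 ^ s * A)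
    (hβ0 : ∀ s ∈ Icc a S, |β 0 s| ≤ K * x ^ (2 * s))
    (hrec : ∀ d, ∀ s ∈ Icc a S,
      β (d + 1) s = ∑ p ∈ Icc s S, (p.choose s : ℝ) * t d ^ (p - s) * β d p) :
    ∀ d, ∀ s ∈ Icc a S, |β d s| ≤ K * x ^ (2 * s) * 2 ^ (s * d) * A ^ d := by
  intro d
  induction d with
  | zero => simpa using hβ0
  | succ d ih =>
    intro s hs
    have htd := ht0 d
    set B := K * x ^ (2 * s) * 2 ^ (s * d) * A ^ d
    have hterm : ∀ p ∈ Icc s S,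
        |(p.choose s : ℝ) * t d ^ (p - s) * β d p| ≤ B * ((p.choose s : ℝ) * x ^ (p - s)) := by
      intro p hp
      obtain ⟨k, rfl⟩ := Nat.exists_eq_add_of_le (mem_Icc.mp hp).1
      have hp' : s + k ∈ Icc a S := by
        simp only [mem_Icc] at hs hp ⊢; omega
      have hshift : (t d * 2 ^ d * x) ^ k ≤ 1 := pow_le_one₀ (by positivity) (ht d)
      rw [abs_mul, abs_mul, abs_of_nonneg (by positivity), abs_of_nonneg (pow_nonneg htd _),
        Nat.add_sub_cancel_left]
      calc ((s + k).choose s : ℝ) * t d ^ k * |β d (s + k)|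
          ≤ ((s + k).choose s : ℝ) * t d ^ k *
              (K * x ^ (2 * (s + k)) * 2 ^ ((s + k) * d) * A ^ d) := by
            gcongr; exact ih _ hp'
        _ = B * ((s + k).choose s * x ^ k) * (t d * 2 ^ d * x) ^ k := by ring
        _ ≤ B * ((s + k).choose s * x ^ k) := mul_le_of_le_one_right (by positivity) hshift
    calc |β (d + 1) s| ≤ ∑ p ∈ Icc s S, |(p.choose s : ℝ) * t d ^ (p - s) * β d p| := by
          rw [hrec d s hs]; exact abs_sum_le_sum_abs _ _
      _ ≤ ∑ p ∈ Icc s S, B * ((p.choose s : ℝ) * x ^ (p - s)) := sum_le_sum hterm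
      _ = B * ∑ p ∈ Icc s S, (p.choose s : ℝ) * x ^ (p - s) := (mul_sum ..).symm
      _ ≤ B * (2 ^ s * A) := by gcongr; exact hsum s
      _ = K * x ^ (2 * s) * 2 ^ (s * (d + 1)) * A ^ (d + 1) := by ring

theorem dyadic_subdivision_coefficient_bound_general (n R : ℕ) (hR : 0 < R)
    (h16 : 16 * R ≤ 2 ^ n) (S : ℕ)
    (nd : ℕ → ℤ) (hnd : ∀ d : ℕ, nd d ≤ (n : ℤ) - (d : ℤ))
    (β : ℕ → ℕ → ℝ)
    (hβ0 : ∀ s ∈ Finset.Icc 3 S,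
      |β 0 s| ≤ (2 : ℝ) ^ ((R : ℤ) - 2) * (2 : ℝ) ^ ((3 - 2 * (s : ℤ)) * (n : ℤ)))
    (hrec : ∀ d : ℕ, ∀ s ∈ Finset.Icc 3 S,
      β (d + 1) s = ∑ p ∈ Finset.Icc s S,
        (p.choose s : ℝ) * (2 : ℝ) ^ (nd d * ((p : ℤ) - (s : ℤ))) * β d p) :
    ∀ d : ℕ, ∀ s ∈ Finset.Icc 3 S,
      |β d s| ≤ (2 : ℝ) ^ ((R : ℤ) - 2) * (2 : ℝ) ^ ((3 - 2 * (s : ℤ)) * (n : ℤ)) *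
        (2 : ℝ) ^ (s * d) * (1 + 1 / (2 * (R : ℝ))) ^ d := by
  set x : ℝ := ((2 : ℝ) ^ n)⁻¹ with hx_def
  have hweight : ∀ s : ℕ, (2 : ℝ) ^ ((3 - 2 * (s : ℤ)) * n) = 2 ^ (3 * n) * x ^ (2 * s) := by
    intro s
    rw [hx_def, ← zpow_natCast, ← zpow_natCast, ← zpow_natCast, ← zpow_neg, ← zpow_mul,
      ← zpow_add₀ two_ne_zero]
    push_cast; ring_nf
  have hshift : ∀ d, (2 : ℝ) ^ nd d * 2 ^ d * x ≤ 1 := by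
    intro d
    rw [hx_def, ← zpow_natCast, ← zpow_natCast, ← zpow_neg, ← zpow_add₀ two_ne_zero,
      ← zpow_add₀ two_ne_zero]
    exact zpow_le_one_of_nonpos₀ one_le_two (by linarith [hnd d])
  have hrec' : ∀ d, ∀ s ∈ Icc 3 S,
      β (d + 1) s = ∑ p ∈ Icc s S, (p.choose s : ℝ) * ((2 : ℝ) ^ nd d) ^ (p - s) * β d p := by
    intro d s hs
    refine (hrec d s hs).trans (sum_congr rfl fun p hp => ?_)
    rw [← zpow_natCast, ← zpow_mul, Nat.cast_sub (mem_Icc.mp hp).1]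
  intro d s hs
  have := abs_le_of_binomial_recursion (K := 2 ^ ((R : ℤ) - 2) * 2 ^ (3 * n)) (by positivity)
    (by positivity) (by positivity) (fun d => by positivity) hshift
    (sum_choose_mul_inv_two_pow_le · S hR h16) (by simpa [hweight, mul_assoc] using hβ0) hrec' d s hs
  simpa [hweight, mul_assoc] using this

/-- The inductive estimate (4.52) controlling the growth of the coefficients
`β_s^{(d)}` produced by the dyadic subdivision in the FFT precomputation. -/
theorem dyadic_subdivision_coefficient_bound (n R : ℕ) (hn : 0 < n) (hR : 0 < R)
    (h16 : 16 * R ≤ 2 ^ n) (S : ℕ) (hS : S = 3 + R / n)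
    (nd : ℕ → ℤ) (hnd : ∀ d : ℕ, nd d ≤ (n : ℤ) - (d : ℤ))
    (β : ℕ → ℕ → ℝ)
    (hβ0 : ∀ s ∈ Finset.Icc 3 S,
      |β 0 s| ≤ (2 : ℝ) ^ ((R : ℤ) - 2) * (2 : ℝ) ^ ((3 - 2 * (s : ℤ)) * (n : ℤ)))
    (hrec : ∀ d : ℕ, ∀ s ∈ Finset.Icc 3 S,
      β (d + 1) s = ∑ p ∈ Finset.Icc s S,
        (p.choose s : ℝ) * (2 : ℝ) ^ (nd d * ((p : ℤ) - (s : ℤ))) * β d p) :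
    ∀ d : ℕ, ∀ s ∈ Finset.Icc 3 S,
      |β d s| ≤ (2 : ℝ) ^ ((R : ℤ) - 2) * (2 : ℝ) ^ ((3 - 2 * (s : ℤ)) * (n : ℤ)) *
        (2 : ℝ) ^ (s * d) * (1 + 1 / (2 * (R : ℝ))) ^ d :=
  dyadic_subdivision_coefficient_bound_general n R hR h16 S nd hnd β hβ0 hrec
end
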